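/- Let ω : 𝕋³ → ℝ be measurable with sup_k |ω(k)| < ∞, and suppose there are constants c_ω and d₁ such that for all t ∈ ℝ and smooth f, |∫_{𝕋³} f(k) e^{−itω(k)} dk| ≤ c_ω ⟨t⟩^{−3/2} ‖f‖_{d₁,∞}. Then for all β > 0 and κ ≥ 0 with β + κ ≤ 1, every σ = ±1 and every α ∈ ℝ, ∫_{𝕋³} dk / |α + i(β+κ) − σω(k)| ≤ 12 c_ω ⟨ln(β+κ)⟩. -/

import Mathlib

open MeasureTheory Set Complex
open scoped ENNReal NNReal


open MeasureTheory

/-- The fundamental domain `[0,1)³` of the unit torus `𝕋³`. -/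
def torusBox : Set (Fin 3 → ℝ) := Set.univ.pi fun _ => Set.Ico (0 : ℝ) 1

/-- `f : 𝕋³ → ℂ`, i.e. a `ℤ³`-periodic function on `ℝ³`. -/
def TorusFun (f : (Fin 3 → ℝ) → ℂ) : Prop :=
  ∀ (x : Fin 3 → ℝ) (n : Fin 3 → ℤ), f (fun i => x i + n i) = f x

/-- `‖f‖_{d,∞}`: the supremum of all derivatives of `f` of order `≤ d`. -/
noncomputable def CkNorm (d : ℕ) (f : (Fin 3 → ℝ) → ℂ) : ℝ :=
  (Finset.range (d + 1)).sup' Finset.nonempty_range_add_one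
    fun j => ⨆ x, ‖iteratedFDeriv ℝ j f x‖

/-- The dispersivity assumption (DR3):
`|∫_{𝕋³} f(k) e^{−itω(k)} dk| ≤ c_ω ⟨t⟩^{−3/2} ‖f‖_{d₁,∞}` for all `t` and smooth `f`. -/
def Dispersive (ω : (Fin 3 → ℝ) → ℝ) (cω : ℝ) (d₁ : ℕ) : Prop :=
  ∀ (t : ℝ) (f : (Fin 3 → ℝ) → ℂ), ContDiff ℝ (⊤ : ℕ∞) f → TorusFun f →
    ‖∫ k in torusBox, f k * Complex.exp (-Complex.I * (t : ℂ) * (ω k : ℂ))‖ ≤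
      cω / Real.sqrt (1 + t ^ 2) ^ ((3 : ℝ) / 2) * CkNorm d₁ f

lemma measurableSet_torusBox : MeasurableSet torusBox :=
  MeasurableSet.univ_pi fun _ => measurableSet_Ico

lemma volume_torusBox : volume torusBox = 1 := by
  rw [torusBox, volume_pi_pi]
  simp

lemma ckNorm_one (d : ℕ) : CkNorm d (fun _ => (1:ℂ)) = 1 := by
  apply le_antisymm
  · apply Finset.sup'_le
    intro j hj
    rcases Nat.eq_zero_or_pos j with h | h
    · subst h
      apply ciSup_le
      intro x
      rw [norm_iteratedFDeriv_zero]
      simp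
    · have : ∀ x : Fin 3 → ℝ, ‖iteratedFDeriv ℝ j (fun _ => (1:ℂ)) x‖ = 0 := by
        intro x
        rw [iteratedFDeriv_const_of_ne (by omega : j ≠ 0) (1:ℂ)]
        simp
      simp only [this]
      rw [ciSup_const]
      norm_num
  · have h0 : (0:ℕ) ∈ Finset.range (d+1) := by simp
    refine le_trans ?_ (Finset.le_sup' _ h0)
    have : ∀ x : Fin 3 → ℝ, ‖iteratedFDeriv ℝ 0 (fun _ => (1:ℂ)) x‖ = 1 := by
      intro x; rw [norm_iteratedFDeriv_zero]; simp
    simp only [this]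
    rw [ciSup_const]

noncomputable def mfun (t : ℝ) : ℝ := min 1 (|t| ^ (-(3/2) : ℝ))

lemma mfun_nonneg (t : ℝ) : 0 ≤ mfun t :=
  le_min zero_le_one (Real.rpow_nonneg (abs_nonneg t) _) |>.trans (le_refl _) |>.trans (le_refl _)

lemma mfun_le_one (t : ℝ) : mfun t ≤ 1 := min_le_left _ _

lemma mfun_even (t : ℝ) : mfun (-t) = mfun t := by simp [mfun]

lemma mfun_measurable : Measurable mfun := by
  apply Measurable.min measurable_const
  fun_prop

lemma mfun_intOn_Ioi : IntegrableOn mfun (Ioi 1) := by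
  have hrp : IntegrableOn (fun t : ℝ => t ^ (-(3/2) : ℝ)) (Ioi 1) :=
    integrableOn_Ioi_rpow_of_lt (by norm_num) one_pos
  refine hrp.mono' mfun_measurable.aestronglyMeasurable ?_
  filter_upwards [ae_restrict_mem measurableSet_Ioi] with t ht
  have ht0 : (0:ℝ) < t := lt_trans one_pos ht
  rw [Real.norm_eq_abs, _root_.abs_of_nonneg (mfun_nonneg t)]
  calc mfun t ≤ |t| ^ (-(3/2) : ℝ) := min_le_right _ _
    _ = t ^ (-(3/2) : ℝ) := by rw [abs_of_pos ht0]

lemma mfun_intOn_Iic : IntegrableOn mfun (Iic (-1)) := by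
  have h : IntegrableOn mfun (Ici (1:ℝ)) :=
    (integrableOn_Ici_iff_integrableOn_Ioi).mpr mfun_intOn_Ioi
  have A : MeasurableEmbedding fun x : ℝ => -x :=
    (Homeomorph.neg ℝ).measurableEmbedding
  rw [IntegrableOn, ← Measure.map_neg_eq_self (volume : Measure ℝ),
    Measure.restrict_map A.measurable (measurableSet_Iic)]
  rw [A.integrable_map_iff]
  have : (fun x : ℝ => -x) ⁻¹' Iic (-1) = Ici 1 := by
    ext x; simp [neg_le]
  rw [this]
  refine h.congr_fun (fun x _ => ?_) measurableSet_Ici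
  simp [Function.comp, mfun_even]

lemma mfun_intOn_Ioc : IntegrableOn mfun (Ioc (-1) 1) := by
  refine Measure.integrableOn_of_bounded (M := 1) (by simp) mfun_measurable.aestronglyMeasurable ?_
  filter_upwards with t
  rw [Real.norm_eq_abs, _root_.abs_of_nonneg (mfun_nonneg t)]
  exact mfun_le_one t

lemma mfun_integrable : Integrable mfun := by
  rw [← integrableOn_univ]
  have h1 : (Iic (-1:ℝ)) ∪ (Ioc (-1) 1 ∪ Ioi 1) = univ := by
    rw [Set.Ioc_union_Ioi_eq_Ioi (by norm_num : (-1:ℝ) ≤ 1), Set.Iic_union_Ioi]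
  rw [← h1]
  exact mfun_intOn_Iic.union (mfun_intOn_Ioc.union mfun_intOn_Ioi)

lemma integral_Ioi_one_rpow : ∫ t : ℝ in Ioi 1, t ^ (-(3/2) : ℝ) = 2 := by
  rw [integral_Ioi_rpow_of_lt (by norm_num) one_pos]
  norm_num

lemma mfun_integral_le : ∫ t : ℝ, mfun t ≤ 6 := by
  have h1 : ∫ t in Iic (-1:ℝ), mfun t = ∫ t in Ioi (1:ℝ), mfun t := by
    calc ∫ t in Iic (-1:ℝ), mfun t = ∫ t in Iic (-1:ℝ), mfun (-t) :=
          setIntegral_congr_fun measurableSet_Iic fun x _ => (mfun_even x).symm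
      _ = ∫ x in Ioi (-(-1):ℝ), mfun x := integral_comp_neg_Iic _ _
      _ = ∫ x in Ioi (1:ℝ), mfun x := by norm_num
  have h2 : ∫ t in Ioi (1:ℝ), mfun t ≤ 2 := by
    rw [← integral_Ioi_one_rpow]
    refine setIntegral_mono_on mfun_intOn_Ioi
      (integrableOn_Ioi_rpow_of_lt (by norm_num) one_pos) measurableSet_Ioi ?_
    intro t ht
    calc mfun t ≤ |t| ^ (-(3/2) : ℝ) := min_le_right _ _
      _ = t ^ (-(3/2) : ℝ) := by rw [abs_of_pos (lt_trans one_pos ht)]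
  have h3 : ∫ t in Ioc (-1:ℝ) 1, mfun t ≤ 2 := by
    have : ∫ t in Ioc (-1:ℝ) 1, (1:ℝ) = 2 := by
      simp [Real.volume_Ioc]
      norm_num
    rw [← this]
    exact setIntegral_mono_on mfun_intOn_Ioc (integrableOn_const (by simp))
      measurableSet_Ioc fun t _ => mfun_le_one t
  have key : ∫ t : ℝ, mfun t =
      (∫ t in Iic (-1:ℝ), mfun t) + ((∫ t in Ioc (-1:ℝ) 1, mfun t) + ∫ t in Ioi (1:ℝ), mfun t) := by
    rw [← setIntegral_union (Set.Ioc_disjoint_Ioi le_rfl) measurableSet_Ioi mfun_intOn_Ioc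
      mfun_intOn_Ioi]
    rw [Set.Ioc_union_Ioi_eq_Ioi (by norm_num : (-1:ℝ) ≤ 1)]
    rw [← setIntegral_union (Set.Iic_disjoint_Ioi le_rfl) measurableSet_Ioi mfun_intOn_Iic
      (by rw [← Set.Ioc_union_Ioi_eq_Ioi (by norm_num : (-1:ℝ) ≤ 1)]
          exact mfun_intOn_Ioc.union mfun_intOn_Ioi)]
    rw [Set.Iic_union_Ioi, setIntegral_univ]
  rw [key, h1]
  linarith

section
variable {ω : (Fin 3 → ℝ) → ℝ} {cω : ℝ} {d₁ : ℕ}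

lemma disp_const (hdisp : Dispersive ω cω d₁) (t : ℝ) :
    ‖∫ k in torusBox, Complex.exp (-Complex.I * (t : ℂ) * (ω k : ℂ))‖ ≤
      cω / Real.sqrt (1 + t ^ 2) ^ ((3 : ℝ) / 2) := by
  have h := hdisp t (fun _ => 1) contDiff_const (fun x n => rfl)
  simpa [ckNorm_one] using h

lemma one_le_cω (hdisp : Dispersive ω cω d₁) : 1 ≤ cω := by
  have h := disp_const hdisp 0
  simp only [Complex.ofReal_zero, mul_zero, zero_mul, Complex.exp_zero,
    integral_const, smul_eq_mul, ne_eq] at h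
  norm_num at h
  simpa [volume_torusBox, measureReal_def] using h

end

-- the key cω/⟨t⟩^{3/2} ≤ cω * mfun t bound
lemma div_sqrt_le_mfun {cω : ℝ} (hc : 0 ≤ cω) (t : ℝ) (ht : t ≠ 0) :
    cω / Real.sqrt (1 + t ^ 2) ^ ((3 : ℝ) / 2) ≤ cω * mfun t := by
  have h1 : (1:ℝ) ≤ Real.sqrt (1 + t ^ 2) := by
    nlinarith [Real.sq_sqrt (show (0:ℝ) ≤ 1+t^2 by positivity), Real.sqrt_nonneg (1+t^2)]
  have h2 : |t| ≤ Real.sqrt (1 + t ^ 2) := by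
    rw [← Real.sqrt_sq_eq_abs]
    exact Real.sqrt_le_sqrt (by nlinarith)
  have habs : (0:ℝ) < |t| := abs_pos.mpr ht
  have hq1 : (1:ℝ) ≤ Real.sqrt (1 + t ^ 2) ^ ((3:ℝ)/2) :=
    Real.one_le_rpow h1 (by norm_num)
  have hq2 : |t| ^ ((3:ℝ)/2) ≤ Real.sqrt (1 + t ^ 2) ^ ((3:ℝ)/2) :=
    Real.rpow_le_rpow (abs_nonneg t) h2 (by norm_num)
  have hq2pos : (0:ℝ) < |t| ^ ((3:ℝ)/2) := Real.rpow_pos_of_pos habs _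
  have hmin : mfun t = min 1 (|t| ^ ((3:ℝ)/2))⁻¹ := by
    rw [mfun, Real.rpow_neg (abs_nonneg t)]
  rw [hmin, div_eq_mul_inv]
  apply mul_le_mul_of_nonneg_left _ hc
  rw [le_min_iff]
  constructor
  · rw [inv_le_one_iff₀]; right; exact hq1
  · exact inv_anti₀ hq2pos hq2

section
variable {ω : (Fin 3 → ℝ) → ℝ} {cω : ℝ}

lemma gauss_bound (hmeas : Measurable ω) (hc : 0 ≤ cω)
    (hdc : ∀ t : ℝ, ‖∫ k in torusBox, Complex.exp (-Complex.I * (t:ℂ) * (ω k : ℂ))‖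
      ≤ cω / Real.sqrt (1 + t ^ 2) ^ ((3 : ℝ) / 2))
    (σ α : ℝ) (hσ : σ^2 = 1) (r : ℝ) (hr : 0 < r) :
    ∫ k in torusBox, Real.exp (-(α - σ * ω k)^2/(2*r^2)) ≤ 6 / Real.sqrt (2*Real.pi) * (cω * r) := by
  haveI : IsFiniteMeasure (volume.restrict torusBox) :=
    ⟨by rw [Measure.restrict_apply_univ, volume_torusBox]; exact ENNReal.one_lt_top⟩
  set μ := volume.restrict torusBox with hμ
  set y : (Fin 3 → ℝ) → ℝ := fun k => α - σ * ω k with hy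
  have hymeas : Measurable y := by fun_prop
  set b : ℝ := r^2/2 with hb
  have hbpos : 0 < b := by positivity
  have hπ : (0:ℝ) < Real.sqrt (2*Real.pi) := Real.sqrt_pos.mpr (by positivity)
  -- Step 1: Fourier representation of the Gaussian
  have key : ∀ x : ℝ, ∫ t : ℝ, Complex.exp (Complex.I * (x:ℂ) * (t:ℂ)) *
      Complex.exp (-(b:ℂ) * (t:ℂ)^2) =
      ((Real.sqrt (2*Real.pi) / r : ℝ) : ℂ) * ((Real.exp (-x^2/(2*r^2)) : ℝ) : ℂ) := by
    intro x
    have hbre : (0:ℝ) < ((b:ℂ)).re := by simpa using hbpos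
    have h := fourierIntegral_gaussian (b := (b:ℂ)) hbre (x:ℂ)
    rw [show (∫ t : ℝ, Complex.exp (Complex.I * (x:ℂ) * (t:ℂ)) *
        Complex.exp (-(b:ℂ) * (t:ℂ)^2)) =
        ∫ t : ℝ, Complex.exp (Complex.I * (x:ℂ) * (t:ℂ)) * Complex.exp (-(b:ℂ) * (t:ℂ)^2) from rfl,
      h]
    congr 1
    · -- (π/b)^(1/2) = √(2π)/r
      have hco : ((Real.pi : ℂ) / (b:ℂ)) = ((2*Real.pi/r^2 : ℝ) : ℂ) := by
        have hr0 : (r:ℂ) ≠ 0 := by exact_mod_cast hr.ne'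
        rw [hb]
        push_cast
        field_simp
      rw [hco, show (1/2 : ℂ) = ((1/2 : ℝ) : ℂ) by norm_num,
        ← Complex.ofReal_cpow (by positivity)]
      congr 1
      rw [← Real.sqrt_eq_rpow, Real.sqrt_div (by positivity) _, Real.sqrt_sq hr.le]
    · -- cexp(-x²/(4b)) = ↑(exp(-x²/(2r²)))
      rw [Complex.ofReal_exp]
      congr 1
      rw [hb]
      have hrne : (r:ℂ) ≠ 0 := by exact_mod_cast hr.ne'
      push_cast
      field_simp
      ring
  -- Step 2: two-variable function and Fubini
  set F : (Fin 3 → ℝ) → ℝ → ℂ := fun k t =>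
    Complex.exp (Complex.I * (y k : ℂ) * (t:ℂ)) * Complex.exp (-(b:ℂ) * (t:ℂ)^2) with hF
  have hFmeas : AEStronglyMeasurable (Function.uncurry F) (μ.prod volume) := by
    apply Measurable.aestronglyMeasurable
    apply Measurable.mul
    · exact Complex.measurable_exp.comp (by fun_prop)
    · exact Complex.measurable_exp.comp (by fun_prop)
  have hgint : Integrable (fun p : (Fin 3 → ℝ) × ℝ => Real.exp (-b * p.2^2)) (μ.prod volume) := by
    have h1 : Integrable (fun _ : Fin 3 → ℝ => (1:ℝ)) μ := integrable_const 1
    have h2 : Integrable (fun t : ℝ => Real.exp (-b * t^2)) := integrable_exp_neg_mul_sq hbpos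
    have := h1.mul_prod h2
    simpa using this
  have hnormF : ∀ p : (Fin 3 → ℝ) × ℝ, ‖Function.uncurry F p‖ = Real.exp (-b * p.2^2) := by
    rintro ⟨k, t⟩
    simp only [Function.uncurry, hF, norm_mul, Complex.norm_exp]
    have e1 : (Complex.I * (y k : ℂ) * (t:ℂ)).re = 0 := by simp
    have e2 : (-(b:ℂ) * (t:ℂ)^2) = ((-b * t^2 : ℝ) : ℂ) := by push_cast; ring
    rw [e1, e2, Complex.ofReal_re, Real.exp_zero, one_mul]
  have hFint : Integrable (Function.uncurry F) (μ.prod volume) := by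
    refine hgint.mono' hFmeas ?_
    filter_upwards with p
    rw [hnormF p]
  have swap : ∫ k, (∫ t, F k t) ∂μ = ∫ t, (∫ k, F k t ∂μ) := integral_integral_swap hFint
  -- Step 3: inner integral
  have inner_eq : ∀ t : ℝ, (∫ k, F k t ∂μ)
      = (Complex.exp (Complex.I * (α:ℂ) * (t:ℂ)) * Complex.exp (-(b:ℂ)*(t:ℂ)^2)) *
        ∫ k, Complex.exp (-Complex.I * ((t*σ : ℝ):ℂ) * (ω k : ℂ)) ∂μ := by
    intro t
    rw [← integral_const_mul]
    apply integral_congr_ae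
    filter_upwards with k
    rw [hF]
    simp only [← Complex.exp_add]
    congr 1
    push_cast [hy]
    ring
  have inner_bound : ∀ t : ℝ, t ≠ 0 → ‖∫ k, F k t ∂μ‖ ≤ cω * mfun t := by
    intro t ht
    rw [inner_eq t, norm_mul, norm_mul]
    have e1 : ‖Complex.exp (Complex.I * (α:ℂ) * (t:ℂ))‖ = 1 := by
      rw [Complex.norm_exp]
      simp
    have e2 : ‖Complex.exp (-(b:ℂ)*(t:ℂ)^2)‖ ≤ 1 := by
      rw [Complex.norm_exp]
      rw [show (-(b:ℂ)*(t:ℂ)^2) = ((-b*t^2 : ℝ):ℂ) by push_cast; ring, Complex.ofReal_re]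
      rw [Real.exp_le_one_iff]
      nlinarith
    have e3 : ‖∫ k, Complex.exp (-Complex.I * ((t*σ : ℝ):ℂ) * (ω k : ℂ)) ∂μ‖ ≤ cω * mfun t := by
      refine le_trans (hdc (t*σ)) ?_
      rw [show (t*σ)^2 = t^2 by nlinarith]
      exact div_sqrt_le_mfun hc t ht
    calc ‖Complex.exp (Complex.I * (α:ℂ) * (t:ℂ))‖ * ‖Complex.exp (-(b:ℂ)*(t:ℂ)^2)‖ *
          ‖∫ k, Complex.exp (-Complex.I * ((t*σ : ℝ):ℂ) * (ω k : ℂ)) ∂μ‖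
        ≤ 1 * 1 * (cω * mfun t) := by
          apply mul_le_mul _ e3 (norm_nonneg _) (by norm_num)
          rw [e1, one_mul, one_mul]
          exact e2
      _ = cω * mfun t := by ring
  -- Step 4: representation of the Gaussian integral
  have hgnn : 0 ≤ ∫ k, Real.exp (-(y k)^2/(2*r^2)) ∂μ :=
    integral_nonneg fun k => Real.exp_nonneg _
  have hx : ∀ x : ℝ, ((Real.exp (-x^2/(2*r^2)) : ℝ) : ℂ)
      = ((r / Real.sqrt (2*Real.pi) : ℝ) : ℂ) *
        ∫ t : ℝ, Complex.exp (Complex.I * (x:ℂ) * (t:ℂ)) * Complex.exp (-(b:ℂ) * (t:ℂ)^2) := by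
    intro x
    rw [key x, ← mul_assoc]
    have h2 : (r / Real.sqrt (2*Real.pi)) * (Real.sqrt (2*Real.pi) / r) = 1 := by
      field_simp
    have : ((r / Real.sqrt (2*Real.pi) : ℝ) : ℂ) * ((Real.sqrt (2*Real.pi) / r : ℝ) : ℂ) = 1 := by
      rw [← Complex.ofReal_mul, h2, Complex.ofReal_one]
    rw [this, one_mul]
  have repr : (∫ k, ((Real.exp (-(y k)^2/(2*r^2)) : ℝ) : ℂ) ∂μ)
      = ((r / Real.sqrt (2*Real.pi) : ℝ) : ℂ) * ∫ t, (∫ k, F k t ∂μ) := by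
    rw [← swap, ← integral_const_mul]
    apply integral_congr_ae
    filter_upwards with k
    exact hx (y k)
  -- Step 5: put everything together
  have habs : ∫ k, Real.exp (-(y k)^2/(2*r^2)) ∂μ
      = ‖∫ k, ((Real.exp (-(y k)^2/(2*r^2)) : ℝ) : ℂ) ∂μ‖ := by
    have h : (∫ k, ((Real.exp (-(y k)^2/(2*r^2)) : ℝ) : ℂ) ∂μ)
        = ((∫ k, Real.exp (-(y k)^2/(2*r^2)) ∂μ : ℝ) : ℂ) := integral_ofReal
    rw [h, Complex.norm_real, Real.norm_eq_abs, _root_.abs_of_nonneg hgnn]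
  have hae0 : ∀ᵐ t : ℝ, t ≠ 0 := by
    rw [ae_iff]
    simp only [ne_eq, not_not]
    rw [show {t : ℝ | t = 0} = {(0:ℝ)} by ext t; simp]
    exact Real.volume_singleton
  have hlast : ‖∫ t, (∫ k, F k t ∂μ)‖ ≤ cω * 6 := by
    calc ‖∫ t, (∫ k, F k t ∂μ)‖ ≤ ∫ t, ‖∫ k, F k t ∂μ‖ := by
          exact norm_integral_le_integral_norm _
      _ ≤ ∫ t, cω * mfun t := by
          refine integral_mono_of_nonneg (ae_of_all _ fun t => norm_nonneg _)
            (mfun_integrable.const_mul cω) ?_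
          filter_upwards [hae0] with t ht
          exact inner_bound t ht
      _ = cω * ∫ t, mfun t := integral_const_mul cω mfun
      _ ≤ cω * 6 := by
          apply mul_le_mul_of_nonneg_left mfun_integral_le hc
  calc ∫ k, Real.exp (-(y k)^2/(2*r^2)) ∂μ
      = ‖∫ k, ((Real.exp (-(y k)^2/(2*r^2)) : ℝ) : ℂ) ∂μ‖ := habs
    _ = ‖((r / Real.sqrt (2*Real.pi) : ℝ) : ℂ)‖ *
        ‖∫ t, (∫ k, F k t ∂μ)‖ := by rw [repr, norm_mul]
    _ ≤ (r / Real.sqrt (2*Real.pi)) * (cω * 6) := by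
        apply mul_le_mul _ hlast (norm_nonneg _) (div_nonneg hr.le hπ.le)
        rw [Complex.norm_real, Real.norm_eq_abs]
        exact le_of_eq (abs_of_nonneg (div_nonneg hr.le hπ.le))
    _ = 6 / Real.sqrt (2*Real.pi) * (cω * r) := by ring

end

lemma exp_half_six_le : Real.exp (1/2) * (6 / Real.sqrt (2*Real.pi)) ≤ 4 := by
  have hπ : (0:ℝ) < Real.sqrt (2*Real.pi) := Real.sqrt_pos.mpr (by positivity)
  rw [mul_div_assoc', div_le_iff₀ hπ]
  have h1 : (Real.exp (1/2) * 6 / 4)^2 ≤ 2*Real.pi := by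
    have he : Real.exp (1/2) ^ 2 = Real.exp 1 := by
      rw [← Real.exp_nat_mul]
      norm_num
    have h2 : Real.exp 1 < 2.7182818286 := Real.exp_one_lt_d9
    have h3 : (3.141592:ℝ) < Real.pi := Real.pi_gt_d6
    rw [div_pow, mul_pow, he]
    nlinarith
  have h0 : Real.exp (1/2) * 6 / 4 ≤ Real.sqrt (2*Real.pi) := by
    rw [show (2*Real.pi) = ((Real.exp (1/2) * 6 / 4)^2 + (2*Real.pi - (Real.exp (1/2) * 6 / 4)^2)) by ring]
    have := Real.sqrt_le_sqrt (show (Real.exp (1/2) * 6 / 4)^2 ≤ (Real.exp (1/2) * 6 / 4)^2 + (2*Real.pi - (Real.exp (1/2) * 6 / 4)^2) by nlinarith)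
    calc Real.exp (1/2) * 6 / 4 = Real.sqrt ((Real.exp (1/2) * 6 / 4)^2) := by
          rw [Real.sqrt_sq (by positivity)]
      _ ≤ _ := this
  nlinarith [Real.exp_pos (1/2:ℝ)]

section
variable {ω : (Fin 3 → ℝ) → ℝ} {cω : ℝ}

lemma cheb (hmeas : Measurable ω) (hc : 0 ≤ cω)
    (hdc : ∀ t : ℝ, ‖∫ k in torusBox, Complex.exp (-Complex.I * (t:ℂ) * (ω k : ℂ))‖
      ≤ cω / Real.sqrt (1 + t ^ 2) ^ ((3 : ℝ) / 2))
    (σ α : ℝ) (hσ : σ^2 = 1) (r : ℝ) (hr : 0 < r) :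
    (volume.restrict torusBox) {k | |α - σ * ω k| < r} ≤ ENNReal.ofReal (4 * cω * r) := by
  set μ := volume.restrict torusBox with hμ
  set y : (Fin 3 → ℝ) → ℝ := fun k => α - σ * ω k with hy
  have hymeas : Measurable y := by fun_prop
  haveI : IsFiniteMeasure μ :=
    ⟨by rw [hμ, Measure.restrict_apply_univ, volume_torusBox]; exact ENNReal.one_lt_top⟩
  have hS : MeasurableSet {k | |y k| < r} := by
    have : {k | |y k| < r} = y ⁻¹' (Ioo (-r) r) := by ext k; simp [abs_lt]
    rw [this]; exact hymeas measurableSet_Ioo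
  set f : (Fin 3 → ℝ) → ℝ := fun k => Real.exp (1/2) * Real.exp (-(y k)^2/(2*r^2)) with hf
  have hfmeas : Measurable f := by fun_prop
  have hfint : Integrable f μ := by
    rw [hμ]
    refine Measure.integrableOn_of_bounded (M := Real.exp (1/2)) ?_ ?_ ?_
    · rw [volume_torusBox]; exact ENNReal.one_ne_top
    · exact hfmeas.aestronglyMeasurable
    · filter_upwards with k
      rw [Real.norm_eq_abs, hf]
      rw [_root_.abs_of_nonneg (by positivity)]
      nlinarith [Real.exp_le_one_iff.mpr (show -(y k)^2/(2*r^2) ≤ 0 by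
          apply div_nonpos_of_nonpos_of_nonneg <;> nlinarith), Real.exp_pos (1/2:ℝ)]
  calc μ {k | |y k| < r} = ∫⁻ k in {k | |y k| < r}, 1 ∂μ := by rw [setLIntegral_one]
    _ ≤ ∫⁻ k in {k | |y k| < r}, ENNReal.ofReal (f k) ∂μ := by
        refine setLIntegral_mono hfmeas.ennreal_ofReal ?_
        intro k hk
        simp only [mem_setOf_eq] at hk
        have h1 : (y k)^2/(2*r^2) ≤ 1/2 := by
          rw [div_le_div_iff₀ (by positivity) (by norm_num)]
          nlinarith [_root_.sq_abs (y k), abs_nonneg (y k)]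
        have h2 : Real.exp (-(1/2:ℝ)) ≤ Real.exp (-(y k)^2/(2*r^2)) := by
          apply Real.exp_le_exp.mpr
          rw [neg_div]
          linarith
        have h3 : (1:ℝ) ≤ f k := by
          rw [hf]
          have he : Real.exp (1/2) * Real.exp (-(1/2:ℝ)) = 1 := by
            rw [← Real.exp_add]; norm_num
          nlinarith [Real.exp_pos (1/2:ℝ)]
        exact ENNReal.one_le_ofReal.mpr h3
    _ ≤ ∫⁻ k, ENNReal.ofReal (f k) ∂μ := setLIntegral_le_lintegral _ _
    _ = ENNReal.ofReal (∫ k, f k ∂μ) :=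
        (ofReal_integral_eq_lintegral_ofReal hfint
          (ae_of_all _ fun k => by positivity)).symm
    _ ≤ ENNReal.ofReal (4 * cω * r) := by
        apply ENNReal.ofReal_le_ofReal
        have h4 : ∫ k, f k ∂μ = Real.exp (1/2) * ∫ k, Real.exp (-(y k)^2/(2*r^2)) ∂μ :=
          integral_const_mul _ _
        rw [h4]
        have h5 := gauss_bound hmeas hc hdc σ α hσ r hr
        calc Real.exp (1/2) * ∫ k, Real.exp (-(y k)^2/(2*r^2)) ∂μ
            ≤ Real.exp (1/2) * (6 / Real.sqrt (2*Real.pi) * (cω * r)) := by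
              apply mul_le_mul_of_nonneg_left _ (Real.exp_pos _).le
              exact h5
          _ = Real.exp (1/2) * (6 / Real.sqrt (2*Real.pi)) * (cω * r) := by ring
          _ ≤ 4 * (cω * r) := by
              apply mul_le_mul_of_nonneg_right exp_half_six_le (by positivity)
          _ = 4 * cω * r := by ring

end

section
variable {ω : (Fin 3 → ℝ) → ℝ} {cω : ℝ}

lemma final_arith (cω ε : ℝ) (hc1 : 1 ≤ cω) (hε0 : 0 < ε) (hε1 : ε ≤ 1) :
    min (4*cω) (1/ε) + (4*cω) * Real.log ((1/ε)/(min (4*cω) (1/ε))) ≤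
      12 * cω * Real.sqrt (1 + Real.log ε ^ 2) := by
  set A : ℝ := 4 * cω with hAd
  set X : ℝ := 1/ε with hXd
  set M : ℝ := min A X with hMd
  have hA4 : 4 ≤ A := by rw [hAd]; linarith
  have hX1 : 1 ≤ X := by rw [hXd, le_div_iff₀ hε0, one_mul]; exact hε1
  have hM0 : 0 < M := lt_min (by linarith) (by linarith)
  set L : ℝ := Real.log X with hLd
  have hL0 : 0 ≤ L := Real.log_nonneg hX1
  have hlogε : Real.log ε = -L := by
    rw [hLd, hXd, one_div, Real.log_inv, neg_neg]
  have hs0 : 0 ≤ Real.sqrt (1 + L^2) := Real.sqrt_nonneg _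
  have hs2 : Real.sqrt (1 + L^2) ^ 2 = 1 + L^2 := Real.sq_sqrt (by positivity)
  have hsq : Real.log ε ^ 2 = L ^ 2 := by rw [hlogε]; ring
  rw [hsq]
  have key : M + A * Real.log (X/M) ≤ A * (1 + L) := by
    rcases le_total A X with hAX | hXA
    · have hMA : M = A := min_eq_left hAX
      rw [hMA]
      have hlA : 0 ≤ Real.log A := Real.log_nonneg (by linarith)
      have hld : Real.log (X/A) = L - Real.log A := by
        rw [Real.log_div (by linarith) (by linarith)]
      rw [hld]
      nlinarith
    · have hMA : M = X := min_eq_right hXA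
      rw [hMA, div_self (by linarith : X ≠ 0), Real.log_one, mul_zero, add_zero]
      nlinarith
  have h3s : 1 + L ≤ 3 * Real.sqrt (1 + L^2) := by
    have : (1+L)/3 ≤ Real.sqrt (1 + L^2) := by
      rw [Real.le_sqrt (by positivity) (by positivity)]
      nlinarith
    linarith
  calc M + A * Real.log (X/M) ≤ A * (1 + L) := key
    _ ≤ A * (3 * Real.sqrt (1 + L^2)) := by
        apply mul_le_mul_of_nonneg_left h3s (by linarith)
    _ = 12 * cω * Real.sqrt (1 + L^2) := by rw [hAd]; ring

theorem main (hmeas : Measurable ω) (hc1 : 1 ≤ cω)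
    (hdc : ∀ t : ℝ, ‖∫ k in torusBox, Complex.exp (-Complex.I * (t:ℂ) * (ω k : ℂ))‖
      ≤ cω / Real.sqrt (1 + t ^ 2) ^ ((3 : ℝ) / 2))
    (β κ : ℝ) (hβ : 0 < β) (hκ : 0 ≤ κ) (hβκ : β + κ ≤ 1)
    (σ : ℝ) (hσ : σ = 1 ∨ σ = -1) (α : ℝ) :
    (∫ k in torusBox,
        1 / ‖((α - σ * ω k : ℝ) : ℂ) + Complex.I * ((β + κ : ℝ) : ℂ)‖) ≤
      12 * cω * Real.sqrt (1 + Real.log (β + κ) ^ 2) := by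
  have hε0 : 0 < β + κ := by linarith
  set ε : ℝ := β + κ with hεd
  have hε1 : ε ≤ 1 := hβκ
  have hσ2 : σ^2 = 1 := by rcases hσ with h|h <;> simp [h]
  have hc : 0 ≤ cω := by linarith
  set μ := volume.restrict torusBox with hμd
  haveI : IsFiniteMeasure μ :=
    ⟨by rw [hμd, Measure.restrict_apply_univ, volume_torusBox]; exact ENNReal.one_lt_top⟩
  have hμuniv : μ univ = 1 := by rw [hμd, Measure.restrict_apply_univ, volume_torusBox]
  set y : (Fin 3 → ℝ) → ℝ := fun k => α - σ * ω k with hyd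
  set g : (Fin 3 → ℝ) → ℝ := fun k => 1 / Real.sqrt ((y k)^2 + ε^2) with hgd
  have hgmeas : Measurable g := by
    apply Measurable.div measurable_const
    exact (Real.continuous_sqrt.measurable).comp (by fun_prop)
  have integrand_eq : ∀ k : Fin 3 → ℝ,
      1 / ‖((α - σ * ω k : ℝ) : ℂ) + Complex.I * ((ε : ℝ) : ℂ)‖ = g k := by
    intro k
    rw [mul_comm Complex.I, Complex.norm_add_mul_I]
  rw [show (∫ k in torusBox,
        1 / ‖((α - σ * ω k : ℝ) : ℂ) + Complex.I * ((ε : ℝ) : ℂ)‖)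
      = ∫ k, g k ∂μ from integral_congr_ae (ae_of_all _ integrand_eq)]
  have gnn : 0 ≤ᵐ[μ] g := ae_of_all _ fun k => by positivity
  rw [integral_eq_lintegral_of_nonneg_ae gnn hgmeas.aestronglyMeasurable]
  have layer : ∫⁻ k, ENNReal.ofReal (g k) ∂μ = ∫⁻ u in Ioi (0:ℝ), μ {k | u < g k} :=
    lintegral_eq_lintegral_meas_lt μ gnn hgmeas.aemeasurable
  set A : ℝ := 4 * cω with hAd
  have hA4 : 4 ≤ A := by linarith
  set X : ℝ := 1/ε with hXd
  have hX1 : 1 ≤ X := by rw [hXd, le_div_iff₀ hε0, one_mul]; exact hε1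
  set M : ℝ := min A X with hMd
  have hM0 : 0 < M := lt_min (by linarith) (by positivity)
  have hMX : M ≤ X := min_le_right _ _
  have hXεinv : X = ε⁻¹ := by rw [hXd, one_div]
  -- the pointwise bound on the measure of superlevel sets
  set i1 : ℝ → ℝ≥0∞ := (Ioc (0:ℝ) M).indicator (fun _ => (1:ℝ≥0∞)) with hi1
  set i2 : ℝ → ℝ≥0∞ := (Ioc M X).indicator (fun u => ENNReal.ofReal (A/u)) with hi2
  have bound : ∀ u ∈ Ioi (0:ℝ), μ {k | u < g k} ≤ i1 u + i2 u := by
    intro u hu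
    simp only [mem_Ioi] at hu
    by_cases hu1 : u ≤ M
    · have h1 : i1 u = 1 := by rw [hi1]; exact indicator_of_mem (show u ∈ Ioc (0:ℝ) M from ⟨hu, hu1⟩) _
      rw [h1]
      refine le_add_right ?_
      calc μ {k | u < g k} ≤ μ univ := measure_mono (subset_univ _)
        _ = 1 := hμuniv
    · push_neg at hu1
      have h1 : i1 u = 0 := by rw [hi1]; exact indicator_of_notMem (fun h => absurd h.2 (not_le.mpr hu1)) _
      rw [h1, zero_add]
      by_cases hu2 : u ≤ X
      · have h2 : i2 u = ENNReal.ofReal (A/u) := by rw [hi2]; exact indicator_of_mem (show u ∈ Ioc M X from ⟨hu1, hu2⟩) _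
        rw [h2]
        have hsub : {k | u < g k} ⊆ {k | |y k| < 1/u} := by
          intro k hk
          simp only [mem_setOf_eq] at hk ⊢
          have hs0 : 0 < Real.sqrt ((y k)^2 + ε^2) := Real.sqrt_pos.mpr (by positivity)
          have hs1 : Real.sqrt ((y k)^2 + ε^2) < 1/u := by
            rw [lt_div_iff₀ hu]
            rw [hgd] at hk
            simp only at hk
            rw [lt_div_iff₀ hs0] at hk
            linarith
          calc |y k| = Real.sqrt ((y k)^2) := (Real.sqrt_sq_eq_abs _).symm
            _ ≤ Real.sqrt ((y k)^2 + ε^2) := Real.sqrt_le_sqrt (by nlinarith)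
            _ < 1/u := hs1
        calc μ {k | u < g k} ≤ μ {k | |y k| < 1/u} := measure_mono hsub
          _ ≤ ENNReal.ofReal (4 * cω * (1/u)) := by
              rw [hμd, hyd]
              exact cheb hmeas hc hdc σ α hσ2 (1/u) (by positivity)
          _ = ENNReal.ofReal (A/u) := by rw [hAd]; ring_nf
      · push_neg at hu2
        have hempty : {k | u < g k} = ∅ := by
          ext k
          simp only [mem_setOf_eq, mem_empty_iff_false, iff_false, not_lt]
          have h3 : Real.sqrt (ε^2) ≤ Real.sqrt ((y k)^2 + ε^2) :=
            Real.sqrt_le_sqrt (by nlinarith)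
          rw [Real.sqrt_sq hε0.le] at h3
          have h4 : g k ≤ X := by
            rw [hgd, hXd]
            simp only
            apply div_le_div_of_nonneg_left zero_le_one hε0 h3
          linarith
        rw [hempty]
        simp
  -- bound the lintegral
  have hi1meas : Measurable i1 := measurable_const.indicator measurableSet_Ioc
  have hi2meas : Measurable i2 := by
    apply Measurable.indicator _ measurableSet_Ioc
    apply ENNReal.measurable_ofReal.comp
    fun_prop
  have hint : IntegrableOn (fun u : ℝ => A/u) (Icc M X) := by
    apply ContinuousOn.integrableOn_compact isCompact_Icc
    apply ContinuousOn.div continuousOn_const continuousOn_id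
    intro x hx
    exact ne_of_gt (lt_of_lt_of_le hM0 hx.1)
  have hlogval : ∫ u in Icc M X, A/u = A * Real.log (X/M) := by
    rw [integral_Icc_eq_integral_Ioc, ← intervalIntegral.integral_of_le hMX]
    have h0 : (0:ℝ) ∉ uIcc M X := by
      rw [uIcc_of_le hMX]
      intro h
      exact absurd h.1 (not_le.mpr hM0)
    calc ∫ u in M..X, A/u = ∫ u in M..X, A * u⁻¹ := by
          apply intervalIntegral.integral_congr
          intro u _
          rw [div_eq_mul_inv]
      _ = A * ∫ u in M..X, u⁻¹ := intervalIntegral.integral_const_mul _ _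
      _ = A * Real.log (X/M) := by rw [integral_inv h0]
  have hlog0 : 0 ≤ Real.log (X/M) :=
    Real.log_nonneg (by rw [le_div_iff₀ hM0]; linarith)
  have big : ∫⁻ u in Ioi (0:ℝ), μ {k | u < g k} ≤ ENNReal.ofReal (M + A * Real.log (X/M)) := by
    calc ∫⁻ u in Ioi (0:ℝ), μ {k | u < g k} ≤ ∫⁻ u in Ioi (0:ℝ), (i1 u + i2 u) := by
          apply lintegral_mono_ae
          filter_upwards [ae_restrict_mem measurableSet_Ioi] with u hu
          exact bound u hu
      _ = (∫⁻ u in Ioi (0:ℝ), i1 u) + ∫⁻ u in Ioi (0:ℝ), i2 u :=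
          lintegral_add_left hi1meas _
      _ ≤ (∫⁻ u, i1 u) + ∫⁻ u, i2 u :=
          add_le_add (setLIntegral_le_lintegral _ _) (setLIntegral_le_lintegral _ _)
      _ ≤ ENNReal.ofReal M + ENNReal.ofReal (A * Real.log (X/M)) := by
          apply add_le_add
          · rw [hi1, lintegral_indicator measurableSet_Ioc]
            simp [Real.volume_Ioc]
          · rw [hi2, lintegral_indicator measurableSet_Ioc]
            calc ∫⁻ u in Ioc M X, ENNReal.ofReal (A/u) ≤
                ∫⁻ u in Icc M X, ENNReal.ofReal (A/u) :=
                  lintegral_mono_set Ioc_subset_Icc_self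
              _ = ENNReal.ofReal (∫ u in Icc M X, A/u) := by
                  rw [← ofReal_integral_eq_lintegral_ofReal hint]
                  filter_upwards [ae_restrict_mem measurableSet_Icc] with u hu
                  have : 0 < u := lt_of_lt_of_le hM0 hu.1
                  positivity
              _ = ENNReal.ofReal (A * Real.log (X/M)) := by rw [hlogval]
      _ = ENNReal.ofReal (M + A * Real.log (X/M)) :=
          (ENNReal.ofReal_add hM0.le (by positivity)).symm
  -- final real arithmetic
  have hreal : M + A * Real.log (X/M) ≤ 12 * cω * Real.sqrt (1 + Real.log ε ^ 2) := by
    rw [hMd, hAd, hXd]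
    exact final_arith cω ε hc1 hε0 hε1
  rw [layer]
  calc (∫⁻ u in Ioi (0:ℝ), μ {k | u < g k}).toReal
      ≤ (ENNReal.ofReal (M + A * Real.log (X/M))).toReal :=
        ENNReal.toReal_mono ENNReal.ofReal_ne_top big
    _ = M + A * Real.log (X/M) := ENNReal.toReal_ofReal (by positivity)
    _ ≤ 12 * cω * Real.sqrt (1 + Real.log ε ^ 2) := hreal

end

/-- For bounded measurable dispersive `ω`, all `β > 0`, `κ ≥ 0` with `β + κ ≤ 1`,
`σ = ±1` and `α ∈ ℝ`: `∫_{𝕋³} dk/|α + i(β+κ) − σω(k)| ≤ 12 c_ω ⟨ln(β+κ)⟩`. -/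
theorem stmt_10 (ω : (Fin 3 → ℝ) → ℝ) (hmeas : Measurable ω)
    (ωmax : ℝ) (hbd : ∀ k, |ω k| ≤ ωmax)
    (hper : ∀ (x : Fin 3 → ℝ) (n : Fin 3 → ℤ), ω (fun i => x i + n i) = ω x)
    (cω : ℝ) (d₁ : ℕ) (hdisp : Dispersive ω cω d₁)
    (β κ : ℝ) (hβ : 0 < β) (hκ : 0 ≤ κ) (hβκ : β + κ ≤ 1)
    (σ : ℝ) (hσ : σ = 1 ∨ σ = -1) (α : ℝ) :
    (∫ k in torusBox,
        1 / ‖((α - σ * ω k : ℝ) : ℂ) + Complex.I * ((β + κ : ℝ) : ℂ)‖) ≤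
      12 * cω * Real.sqrt (1 + Real.log (β + κ) ^ 2) := by
  exact main hmeas (one_le_cω hdisp) (disp_const hdisp) β κ hβ hκ hβκ σ hσ α
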